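/- arXiv:2404.09972 — 4 statements merged into one kernel-verified Lean document; each statement's English description precedes it below -/
import Mathlib

section
/- Let $(G, \Gamma, \rhd_1, \rhd_2)$ be a matched pair of groups. Define $g \rhd_1^G (h,t) := ((t \rhd_2 g)hg^{-1},\, g \rhd_1 t)$ for $g, h \in G$, $t \in \Gamma$, and $(h,t) \rhd_2^G g := t \rhd_2 g$. Then $(G,\, G \times \Gamma,\, \rhd_1^G,\, \rhd_2^G)$ is a matched pair of groups, where $G \times \Gamma$ denotes the direct product group. -/
/-!
Each axiom for `(G, G × Γ)` has a `Γ`-component, which is literally the corresponding axiom for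
`(G, Γ)`, and a `G`-component. Since `▷₁ᴳ` acts on the `G`-coordinate by `h ↦ (t ▷₂ g) h g⁻¹`,
the `G`-component of `(g g') ▷₁ᴳ p = g ▷₁ᴳ (g' ▷₁ᴳ p)` is the mixed axiom for `▷₂`, and in
`g ▷₁ᴳ (p q)` the inner factors `(t ▷₂ g)⁻¹ (t ▷₂ g)` cancel, leaving the action law of `▷₂`.
-/

/-- A matched pair of groups. -/
def IsMatchedPair {G Γ : Type*} [Group G] [Group Γ] (r1 : G → Γ → Γ) (r2 : Γ → G → G) : Prop :=
  (∀ s, r1 1 s = s) ∧ (∀ g h s, r1 (g * h) s = r1 g (r1 h s)) ∧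
  (∀ g, r2 1 g = g) ∧ (∀ s t g, r2 (s * t) g = r2 s (r2 t g)) ∧
  (∀ g, r1 g 1 = 1) ∧ (∀ s, r2 s 1 = 1) ∧
  (∀ g s t, r1 g (s * t) = r1 (r2 t g) s * r1 g t) ∧
  (∀ s g h, r2 s (g * h) = r2 (r1 h s) g * r2 s h)

/-- The action `g ▷₁ᴳ (h,t) := ((t ▷₂ g) h g⁻¹, g ▷₁ t)` of `G` on the set `G × Γ`. -/
def r1G {G Γ : Type*} [Group G] [Group Γ] (r1 : G → Γ → Γ) (r2 : Γ → G → G) :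
    G → G × Γ → G × Γ :=
  fun g p => (r2 p.2 g * p.1 * g⁻¹, r1 g p.2)

/-- The action `(h,t) ▷₂ᴳ g := t ▷₂ g` of `G × Γ` on the set `G`. -/
def r2G {G Γ : Type*} [Group G] [Group Γ] (r2 : Γ → G → G) : G × Γ → G → G :=
  fun p g => r2 p.2 g

section

variable {G Γ : Type*} [Group G] [Group Γ] {r1 : G → Γ → Γ} {r2 : Γ → G → G}

theorem r1G_one_left (r1_one_left : ∀ s, r1 1 s = s) (r2_one_right : ∀ s, r2 s 1 = 1)
    (p : G × Γ) : r1G r1 r2 1 p = p := by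
  simp [r1G, r1_one_left, r2_one_right]

theorem r1G_mul_left (r1_mul_left : ∀ g h s, r1 (g * h) s = r1 g (r1 h s))
    (r2_mul_right : ∀ s g h, r2 s (g * h) = r2 (r1 h s) g * r2 s h) (g g' : G) (p : G × Γ) :
    r1G r1 r2 (g * g') p = r1G r1 r2 g (r1G r1 r2 g' p) := by
  simp only [r1G, r2_mul_right, r1_mul_left, Prod.mk.injEq, and_true]
  group

theorem r1G_one_right (r2_one_left : ∀ g, r2 1 g = g) (r1_one_right : ∀ g, r1 g 1 = 1) (g : G) :
    r1G r1 r2 g 1 = 1 := by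
  simp [r1G, r2_one_left, r1_one_right]

theorem r1G_mul_right (r2_mul_left : ∀ s t g, r2 (s * t) g = r2 s (r2 t g))
    (r1_mul_right : ∀ g s t, r1 g (s * t) = r1 (r2 t g) s * r1 g t) (g : G) (p q : G × Γ) :
    r1G r1 r2 g (p * q) = r1G r1 r2 (r2G r2 q g) p * r1G r1 r2 g q := by
  simp only [r1G, r2G, Prod.fst_mul, Prod.snd_mul, Prod.mk_mul_mk, r2_mul_left, r1_mul_right,
    Prod.mk.injEq, and_true]
  group

end

/-- `(G, G × Γ, ▷₁ᴳ, ▷₂ᴳ)` is a matched pair of groups. -/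
theorem statement_6 {G Γ : Type*} [Group G] [Group Γ]
    (r1 : G → Γ → Γ) (r2 : Γ → G → G) (h : IsMatchedPair r1 r2) :
    IsMatchedPair (r1G r1 r2) (r2G r2) := by
  obtain ⟨r1_one_left, r1_mul_left, r2_one_left, r2_mul_left, r1_one_right, r2_one_right,
    r1_mul_right, r2_mul_right⟩ := h
  exact ⟨r1G_one_left r1_one_left r2_one_right, r1G_mul_left r1_mul_left r2_mul_right,
    r2_one_left, fun p q g => r2_mul_left p.2 q.2 g,
    r1G_one_right r2_one_left r1_one_right, fun p => r2_one_right p.2,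
    r1G_mul_right r2_mul_left r1_mul_right, fun p g g' => r2_mul_right p.2 g g'⟩
end

section
/- Let $(G, \Gamma, \rhd_1, \rhd_2)$ be a matched pair of groups with Zappa–Szép product $G \bowtie \Gamma$. Define $(g,s) \,\tilde\rhd_1\, (h,t) := g \rhd_1^G (s \rhd_1^\Gamma (h,t))$ and $(h,t) \,\tilde\rhd_2\, (g,s) := ((s \rhd_1^\Gamma (h,t))_G \rhd_2^G g,\ (h,t) \rhd_2^\Gamma s)$, where $g \rhd_1^G (h,t) = ((t \rhd_2 g)hg^{-1}, g \rhd_1 t)$, $s \rhd_1^\Gamma (h,t) = (s \rhd_2 h, (h \rhd_1 s)ts^{-1})$, $(h,t) \rhd_2^G g = t \rhd_2 g$, $(h,t) \rhd_2^\Gamma s = h \rhd_1 s$, and $(s \rhd_1^\Gamma (h,t))_G = s \rhd_2 h$. Then $(G \bowtie \Gamma,\ G \times \Gamma,\ \tilde\rhd_1,\ \tilde\rhd_2)$ is a matched pair of groups. -/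
/-- The Zappa–Szép multiplication on `G × Γ` (the product of `G ⋈ Γ`). -/
def zsMul {G Γ : Type*} [Group G] [Group Γ] (r1 : G → Γ → Γ) (r2 : Γ → G → G) :
    G × Γ → G × Γ → G × Γ :=
  fun x y => (x.1 * (r2 x.2 y.1⁻¹)⁻¹, r1 y.1⁻¹ x.2 * y.2)

/-- The induced action `(g,s) ⋗₁ (h,t)` of `G ⋈ Γ` on the set `G × Γ`. -/
def tR1 {G Γ : Type*} [Group G] [Group Γ] (r1 : G → Γ → Γ) (r2 : Γ → G → G) :
    G × Γ → G × Γ → G × Γ :=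
  fun x a => (r2 (r1 a.1 x.2 * a.2 * x.2⁻¹) x.1 * r2 x.2 a.1 * x.1⁻¹,
    r1 x.1 (r1 a.1 x.2 * a.2 * x.2⁻¹))

/-- The induced action `(h,t) ⋗₂ (g,s)` of `G × Γ` on the set `G ⋈ Γ`. -/
def tR2 {G Γ : Type*} [Group G] [Group Γ] (r1 : G → Γ → Γ) (r2 : Γ → G → G) :
    G × Γ → G × Γ → G × Γ :=
  fun a x => (r2 (r1 a.1 x.2 * a.2 * x.2⁻¹) x.1, r1 a.1 x.2)

/-! The action `⋗₁` of `(g, s)` is `g ▷₁^G` after `s ▷₁^Γ`, and these are genuine actions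
of `G` and `Γ` on `G × Γ`. They satisfy `(k ▷₁ u) ▷₁^Γ (k ▷₁^G a) = (u ▷₂ k) ▷₁^G (u ▷₁^Γ a)`,
which mirrors the multiplication rule `(g, k ▷₁ u) (k, s') = (g (u ▷₂ k), u s')` of `G ⋈ Γ`, so
`⋗₁` is an action of `G ⋈ Γ`. Both actions are multiplicative on the direct product up to the
matched-pair twist, e.g.
`s ▷₁^Γ ((h, t) (h', t')) = (h' ▷₁ s) ▷₁^Γ (h, t) · s ▷₁^Γ (h', t')`, which yields the
compatibility of `⋗₁` and `⋗₂` with products in `G × Γ`. -/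

section Actions

variable {G Γ : Type*} [Group G] [Group Γ]

/-- `g ▷₁^G (h, t)` of the paper. -/
def actG (r1 : G → Γ → Γ) (r2 : Γ → G → G) (g : G) (a : G × Γ) : G × Γ :=
  (r2 a.2 g * a.1 * g⁻¹, r1 g a.2)

/-- `s ▷₁^Γ (h, t)` of the paper. -/
def actΓ (r1 : G → Γ → Γ) (r2 : Γ → G → G) (s : Γ) (a : G × Γ) : G × Γ :=
  (r2 s a.1, r1 a.1 s * a.2 * s⁻¹)

theorem tR1_eq_actG_actΓ (r1 : G → Γ → Γ) (r2 : Γ → G → G) (x a : G × Γ) :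
    tR1 r1 r2 x a = actG r1 r2 x.1 (actΓ r1 r2 x.2 a) :=
  rfl

theorem tR2_eq_actΓ (r1 : G → Γ → Γ) (r2 : Γ → G → G) (a x : G × Γ) :
    tR2 r1 r2 a x = (r2 (actΓ r1 r2 x.2 a).2 x.1, r1 a.1 x.2) :=
  rfl

end Actions

namespace IsMatchedPair

variable {G Γ : Type*} [Group G] [Group Γ] {r1 : G → Γ → Γ} {r2 : Γ → G → G}

theorem one_r1 (h : IsMatchedPair r1 r2) (s : Γ) : r1 1 s = s := h.1 s

theorem mul_r1 (h : IsMatchedPair r1 r2) (g k : G) (s : Γ) : r1 (g * k) s = r1 g (r1 k s) :=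
  h.2.1 g k s

theorem one_r2 (h : IsMatchedPair r1 r2) (g : G) : r2 1 g = g := h.2.2.1 g

theorem mul_r2 (h : IsMatchedPair r1 r2) (s t : Γ) (g : G) : r2 (s * t) g = r2 s (r2 t g) :=
  h.2.2.2.1 s t g

theorem r1_one (h : IsMatchedPair r1 r2) (g : G) : r1 g 1 = 1 := h.2.2.2.2.1 g

theorem r2_one (h : IsMatchedPair r1 r2) (s : Γ) : r2 s 1 = 1 := h.2.2.2.2.2.1 s

theorem r1_mul (h : IsMatchedPair r1 r2) (g : G) (s t : Γ) :
    r1 g (s * t) = r1 (r2 t g) s * r1 g t :=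
  h.2.2.2.2.2.2.1 g s t

theorem r2_mul (h : IsMatchedPair r1 r2) (s : Γ) (g k : G) :
    r2 s (g * k) = r2 (r1 k s) g * r2 s k :=
  h.2.2.2.2.2.2.2 s g k

theorem r1_inv_r1 (h : IsMatchedPair r1 r2) (g : G) (s : Γ) : r1 g⁻¹ (r1 g s) = s := by
  rw [← h.mul_r1, inv_mul_cancel, h.one_r1]

theorem r1_r1_inv (h : IsMatchedPair r1 r2) (g : G) (s : Γ) : r1 g (r1 g⁻¹ s) = s := by
  rw [← h.mul_r1, mul_inv_cancel, h.one_r1]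

theorem r2_inv_r2 (h : IsMatchedPair r1 r2) (s : Γ) (g : G) : r2 s⁻¹ (r2 s g) = g := by
  rw [← h.mul_r2, inv_mul_cancel, h.one_r2]

theorem r2_r1_inv (h : IsMatchedPair r1 r2) (s : Γ) (g : G) : r2 (r1 g s) g⁻¹ = (r2 s g)⁻¹ := by
  have h1 := h.r2_mul s g⁻¹ g
  rw [inv_mul_cancel, h.r2_one] at h1
  exact eq_inv_of_mul_eq_one_left h1.symm

theorem r1_r2_inv (h : IsMatchedPair r1 r2) (g : G) (s : Γ) : r1 (r2 s g) s⁻¹ = (r1 g s)⁻¹ := by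
  have h1 := h.r1_mul g s⁻¹ s
  rw [inv_mul_cancel, h.r1_one] at h1
  exact eq_inv_of_mul_eq_one_left h1.symm

theorem zsMul_mk_r1 (h : IsMatchedPair r1 r2) (g k : G) (u s' : Γ) :
    zsMul r1 r2 (g, r1 k u) (k, s') = (g * r2 u k, u * s') := by
  simp only [zsMul, h.r2_r1_inv, inv_inv, h.r1_inv_r1]

theorem one_actG (h : IsMatchedPair r1 r2) (a : G × Γ) : actG r1 r2 1 a = a := by
  simp [actG, h.r2_one, h.one_r1]

theorem mul_actG (h : IsMatchedPair r1 r2) (g k : G) (a : G × Γ) :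
    actG r1 r2 (g * k) a = actG r1 r2 g (actG r1 r2 k a) := by
  simp only [actG, h.r2_mul, h.mul_r1, Prod.mk.injEq, and_true]
  group

theorem actG_one (h : IsMatchedPair r1 r2) (g : G) : actG r1 r2 g 1 = 1 := by
  simp [actG, h.one_r2, h.r1_one, Prod.ext_iff]

theorem actG_mul (h : IsMatchedPair r1 r2) (g : G) (a b : G × Γ) :
    actG r1 r2 g (a * b) = actG r1 r2 (r2 b.2 g) a * actG r1 r2 g b := by
  simp only [actG, Prod.fst_mul, Prod.snd_mul, h.mul_r2, h.r1_mul, Prod.mk_mul_mk]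
  group

theorem one_actΓ (h : IsMatchedPair r1 r2) (a : G × Γ) : actΓ r1 r2 1 a = a := by
  simp [actΓ, h.one_r2, h.r1_one]

theorem mul_actΓ (h : IsMatchedPair r1 r2) (s t : Γ) (a : G × Γ) :
    actΓ r1 r2 (s * t) a = actΓ r1 r2 s (actΓ r1 r2 t a) := by
  simp only [actΓ, h.mul_r2, h.r1_mul, Prod.mk.injEq, true_and]
  group

theorem actΓ_one (h : IsMatchedPair r1 r2) (s : Γ) : actΓ r1 r2 s 1 = 1 := by
  simp [actΓ, h.r2_one, h.one_r1, Prod.ext_iff]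

theorem actΓ_mul (h : IsMatchedPair r1 r2) (s : Γ) (a b : G × Γ) :
    actΓ r1 r2 s (a * b) = actΓ r1 r2 (r1 b.1 s) a * actΓ r1 r2 s b := by
  simp only [actΓ, Prod.fst_mul, Prod.snd_mul, h.r2_mul, h.mul_r1, Prod.mk_mul_mk]
  group

theorem actΓ_r1_actG (h : IsMatchedPair r1 r2) (g : G) (u : Γ) (a : G × Γ) :
    actΓ r1 r2 (r1 g u) (actG r1 r2 g a) = actG r1 r2 (r2 u g) (actΓ r1 r2 u a) := by
  obtain ⟨k, t⟩ := a
  simp only [actG, actΓ, Prod.mk.injEq]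
  constructor
  · rw [h.r2_mul, h.r1_inv_r1, h.r2_r1_inv, h.r2_mul, h.mul_r2, h.mul_r2, h.r2_inv_r2]
  · rw [h.r1_mul, h.r1_mul, h.r2_inv_r2, h.mul_r1, h.r1_inv_r1, h.mul_r1, h.r1_r2_inv]

theorem tR1_one_left (h : IsMatchedPair r1 r2) (a : G × Γ) : tR1 r1 r2 (1, 1) a = a := by
  rw [tR1_eq_actG_actΓ, h.one_actΓ, h.one_actG]

theorem tR1_zsMul (h : IsMatchedPair r1 r2) (x y a : G × Γ) :
    tR1 r1 r2 (zsMul r1 r2 x y) a = tR1 r1 r2 x (tR1 r1 r2 y a) := by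
  obtain ⟨g, s⟩ := x
  obtain ⟨k, s'⟩ := y
  obtain ⟨u, rfl⟩ : ∃ u, s = r1 k u := ⟨r1 k⁻¹ s, (h.r1_r1_inv k s).symm⟩
  simp only [h.zsMul_mk_r1, tR1_eq_actG_actΓ, h.mul_actG, h.mul_actΓ, h.actΓ_r1_actG]

theorem tR2_one_left (h : IsMatchedPair r1 r2) (x : G × Γ) : tR2 r1 r2 (1, 1) x = x := by
  simp [tR2, h.one_r1, h.one_r2]

theorem tR2_mul (h : IsMatchedPair r1 r2) (a b x : G × Γ) :
    tR2 r1 r2 (a * b) x = tR2 r1 r2 a (tR2 r1 r2 b x) := by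
  simp only [tR2_eq_actΓ, h.actΓ_mul, Prod.snd_mul, Prod.fst_mul, h.mul_r2, h.mul_r1]

theorem tR1_one_right (h : IsMatchedPair r1 r2) (x : G × Γ) : tR1 r1 r2 x 1 = 1 := by
  rw [tR1_eq_actG_actΓ, h.actΓ_one, h.actG_one]

theorem tR2_one_right (h : IsMatchedPair r1 r2) (a : G × Γ) : tR2 r1 r2 a (1, 1) = (1, 1) := by
  simp [tR2, h.r1_one, h.r2_one]

theorem tR1_mul (h : IsMatchedPair r1 r2) (x a b : G × Γ) :
    tR1 r1 r2 x (a * b) = tR1 r1 r2 (tR2 r1 r2 b x) a * tR1 r1 r2 x b := by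
  rw [tR1_eq_actG_actΓ, h.actΓ_mul, h.actG_mul]
  rfl

theorem tR2_zsMul (h : IsMatchedPair r1 r2) (a x y : G × Γ) :
    tR2 r1 r2 a (zsMul r1 r2 x y) = zsMul r1 r2 (tR2 r1 r2 (tR1 r1 r2 y a) x) (tR2 r1 r2 a y) := by
  obtain ⟨g, s⟩ := x
  obtain ⟨k, s'⟩ := y
  obtain ⟨u, rfl⟩ : ∃ u, s = r1 k u := ⟨r1 k⁻¹ s, (h.r1_r1_inv k s).symm⟩
  set b := actΓ r1 r2 s' a
  have hb : r1 (actG r1 r2 k b).1 (r1 k u) = r1 (r2 b.2 k) (r1 b.1 u) := by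
    rw [actG, ← h.mul_r1, inv_mul_cancel_right, h.mul_r1]
  rw [h.zsMul_mk_r1]
  change (r2 (actΓ r1 r2 (u * s') a).2 (g * r2 u k), r1 a.1 (u * s')) =
    zsMul r1 r2 (r2 (actΓ r1 r2 (r1 k u) (actG r1 r2 k b)).2 g, r1 (actG r1 r2 k b).1 (r1 k u))
      (r2 b.2 k, r1 a.1 s')
  rw [h.mul_actΓ, h.actΓ_r1_actG, hb, h.zsMul_mk_r1, h.r2_mul, h.r1_mul a.1 u s']
  simp only [actG, actΓ, b, h.mul_r2, h.r2_inv_r2]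

end IsMatchedPair

/-- `(G ⋈ Γ, G × Γ, ⋗₁, ⋗₂)` is a matched pair of groups:  the matched-pair axioms hold,
where the first group is the Zappa–Szép product `G ⋈ Γ` (with multiplication `zsMul` and
identity `(1,1)`) and the second is the direct product `G × Γ`. -/
theorem statement_8 {G Γ : Type*} [Group G] [Group Γ]
    (r1 : G → Γ → Γ) (r2 : Γ → G → G) (h : IsMatchedPair r1 r2) :
    (∀ a : G × Γ, tR1 r1 r2 ((1 : G), (1 : Γ)) a = a) ∧
    (∀ x y a : G × Γ, tR1 r1 r2 (zsMul r1 r2 x y) a = tR1 r1 r2 x (tR1 r1 r2 y a)) ∧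
    (∀ x : G × Γ, tR2 r1 r2 ((1 : G), (1 : Γ)) x = x) ∧
    (∀ a b x : G × Γ, tR2 r1 r2 (a * b) x = tR2 r1 r2 a (tR2 r1 r2 b x)) ∧
    (∀ x : G × Γ, tR1 r1 r2 x (1 : G × Γ) = 1) ∧
    (∀ a : G × Γ, tR2 r1 r2 a ((1 : G), (1 : Γ)) = ((1 : G), (1 : Γ))) ∧
    (∀ x a b : G × Γ, tR1 r1 r2 x (a * b) = tR1 r1 r2 (tR2 r1 r2 b x) a * tR1 r1 r2 x b) ∧
    (∀ a x y : G × Γ, tR2 r1 r2 a (zsMul r1 r2 x y)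
      = zsMul r1 r2 (tR2 r1 r2 (tR1 r1 r2 y a) x) (tR2 r1 r2 a y)) :=
  ⟨h.tR1_one_left, h.tR1_zsMul, h.tR2_one_left, h.tR2_mul, h.tR1_one_right, h.tR2_one_right,
    h.tR1_mul, h.tR2_zsMul⟩
end

section
/- Let $(G, \Gamma, \rhd_1, \rhd_2)$ be a matched pair of groups, and let $(G \bowtie \Gamma, G \times \Gamma, \tilde\rhd_1, \tilde\rhd_2)$ be the induced matched pair with $(g,s) \tilde\rhd_1 (h,t) = ((((h \rhd_1 s)ts^{-1}) \rhd_2 g)(s \rhd_2 h)g^{-1},\ g \rhd_1 ((h \rhd_1 s)ts^{-1}))$ and $(h,t) \tilde\rhd_2 (g,s) = (((h \rhd_1 s)ts^{-1}) \rhd_2 g,\ h \rhd_1 s)$. Define $\phi, \psi : G \times \Gamma \to G \bowtie \Gamma$ by $\phi(h,t) = (e,t)$, $\psi(h,t) = (h,t)$. Then for all $(g,s) \in G \bowtie \Gamma$ and $(h,t) \in G \times \Gamma$: $((h,t) \tilde\rhd_2 (g,s)) \cdot \phi(h,t) = \phi((g,s) \tilde\rhd_1 (h,t)) \cdot (g,s)$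 in $G \bowtie \Gamma$. -/
namespace IsMatchedPair

variable {G Γ : Type*} [Group G] [Group Γ] {r1 : G → Γ → Γ} {r2 : Γ → G → G}

theorem act₁_inv_act₁ (h : IsMatchedPair r1 r2) (g : G) (u : Γ) : r1 g⁻¹ (r1 g u) = u := by
  obtain ⟨one_act₁, mul_act₁, -⟩ := h
  rw [← mul_act₁, inv_mul_cancel, one_act₁]

theorem act₂_act₁_inv (h : IsMatchedPair r1 r2) (u : Γ) (g : G) :
    r2 (r1 g u) g⁻¹ = (r2 u g)⁻¹ := by
  have cancel := h.act₁_inv_act₁ g u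
  obtain ⟨-, -, -, -, -, act₂_one, -, act₂_mul⟩ := h
  -- expand `1 = r2 (r1 g u) (g * g⁻¹)` with the product rule for `r2`
  have expand := act₂_mul (r1 g u) g g⁻¹
  rw [mul_inv_cancel, act₂_one, cancel] at expand
  exact eq_inv_of_mul_eq_one_right expand.symm

theorem zsMul_one_right (h : IsMatchedPair r1 r2) (x : G × Γ) (t : Γ) :
    zsMul r1 r2 x (1, t) = (x.1, x.2 * t) := by
  obtain ⟨one_act₁, -, -, -, -, act₂_one, -⟩ := h
  simp only [zsMul, inv_one, act₂_one, mul_one, one_act₁]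

theorem zsMul_one_act₁ (h : IsMatchedPair r1 r2) (g : G) (u s : Γ) :
    zsMul r1 r2 (1, r1 g u) (g, s) = (r2 u g, u * s) := by
  simp only [zsMul, h.act₂_act₁_inv, inv_inv, one_mul, h.act₁_inv_act₁]

end IsMatchedPair

/-- For `φ(h,t) = (e,t)`:  `((h,t) ⋗₂ (g,s)) · φ(h,t) = φ((g,s) ⋗₁ (h,t)) · (g,s)` in
the Zappa–Szép product `G ⋈ Γ`. -/
theorem statement_10 {G Γ : Type*} [Group G] [Group Γ]
    (r1 : G → Γ → Γ) (r2 : Γ → G → G) (h : IsMatchedPair r1 r2) :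
    ∀ x a : G × Γ,
      zsMul r1 r2 (tR2 r1 r2 a x) ((1 : G), a.2)
        = zsMul r1 r2 ((1 : G), (tR1 r1 r2 x a).2) x := by
  rintro ⟨g, s⟩ ⟨k, t⟩
  rw [h.zsMul_one_right, tR1, tR2, h.zsMul_one_act₁]
  ext
  · rfl
  · simp only [inv_mul_cancel_right]
end

section
/- Let $\mathcal{C}$ be a $(G,\Gamma)$-crossed monoidal category for a matched pair $(G,\Gamma)$. If a homogeneous object $\lambda \in \mathcal{C}_{\partial\lambda}$ has a left dual $\lambda^\vee$ with evaluation $\mathrm{ev}_\lambda : \lambda^\vee \otimes \lambda \to \mathbf{1}$ and coevaluation $\mathrm{coev}_\lambda : \mathbf{1} \to \lambda \otimes \lambda^\vee$, then for any $g \in G$, the object ${}^g\lambda := \gamma^{\mathcal{C}}(g)(\lambda)$ has a left dual given by ${}^{\partial\lambda \rhd_2 g}(\lambda^\vee)$, with evaluation ${}^g\mathrm{ev}_\lambda$ and coevaluation ${}^{\partial\lambda \rhd_2 g}\mathrm{coev}_\lambda$ (composed with the canonical coherence isomorphisms), satisfying the zigzag (conjugate) equations. -/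
/-!
Put `F = γ g`, `F' = γ (s ▷₂ g)` for `s = ∂λ`. Because `s⁻¹ ▷₂ (s ▷₂ g) = g` and `1 ▷₂ g = g`, the
maps `J g s`, `J (s ▷₂ g) s⁻¹` and `J g 1` (the latter two reindexed along these equalities) are
tensorators `F'A ⊗ FB ⟶ F(A ⊗ B)`, `FA ⊗ F'B ≅ F'(A ⊗ B)` and `FA ⊗ FB ⟶ F(A ⊗ B)`. Each transported
zigzag is then the image under `F` (resp. `F'`) of the original zigzag: the unit maps and the
(co)evaluation slide through the tensorators by naturality and the unit axioms, and the crossed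
pentagon in degrees `(s⁻¹, s)` (resp. `(s, s⁻¹)`) lets `ν` cancel against `ν⁻¹`.
-/

open CategoryTheory MonoidalCategory

section TransportDuality

variable {C : Type*} [Category C] [MonoidalCategory C] {F F' : C ⥤ C}
  (μ : ∀ A B : C, F'.obj A ⊗ F.obj B ⟶ F.obj (A ⊗ B))
  (ν : ∀ A B : C, F.obj A ⊗ F'.obj B ≅ F'.obj (A ⊗ B))
  (ε : 𝟙_ C ≅ F.obj (𝟙_ C)) (ε' : 𝟙_ C ⟶ F'.obj (𝟙_ C))
  {X Y : C} (ev : Y ⊗ X ⟶ 𝟙_ C) (coev : 𝟙_ C ⟶ X ⊗ Y)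

theorem map_zigzag_left (μ₁ : ∀ A B : C, F.obj A ⊗ F.obj B ⟶ F.obj (A ⊗ B))
    (hμ : ∀ {A A' : C} (f : A ⟶ A') (B : C),
      (F'.map f ▷ F.obj B) ≫ μ A' B = μ A B ≫ F.map (f ▷ B))
    (hμ₁ : ∀ (A : C) {B B' : C} (f : B ⟶ B'),
      (F.obj A ◁ F.map f) ≫ μ₁ A B' = μ₁ A B ≫ F.map (A ◁ f))
    (hpent : ((ν X Y).hom ▷ F.obj X) ≫ μ (X ⊗ Y) X ≫ F.map (α_ X Y X).hom
      = (α_ (F.obj X) (F'.obj Y) (F.obj X)).hom ≫ (F.obj X ◁ μ Y X) ≫ μ₁ X (Y ⊗ X))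
    (hunitl : (ε' ▷ F.obj X) ≫ μ (𝟙_ C) X ≫ F.map (λ_ X).hom = (λ_ (F.obj X)).hom)
    (hunitr : (F.obj X ◁ ε.hom) ≫ μ₁ X (𝟙_ C) ≫ F.map (ρ_ X).hom = (ρ_ (F.obj X)).hom)
    (hzig : (λ_ X).inv ≫ (coev ▷ X) ≫ (α_ X Y X).hom ≫ (X ◁ ev) ≫ (ρ_ X).hom = 𝟙 X) :
    (λ_ (F.obj X)).inv ≫ ((ε' ≫ F'.map coev ≫ (ν X Y).inv) ▷ F.obj X) ≫
        (α_ (F.obj X) (F'.obj Y) (F.obj X)).hom ≫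
        (F.obj X ◁ (μ Y X ≫ F.map ev ≫ ε.inv)) ≫ (ρ_ (F.obj X)).hom = 𝟙 (F.obj X) := by
  have hr : (F.obj X ◁ ε.inv) ≫ (ρ_ (F.obj X)).hom = μ₁ X (𝟙_ C) ≫ F.map (ρ_ X).hom := by
    rw [← hunitr, whiskerLeft_inv_hom_assoc]
  have hl : (ε' ▷ F.obj X) ≫ μ (𝟙_ C) X = (λ_ (F.obj X)).hom ≫ F.map (λ_ X).inv := by
    rw [← hunitl]; simp
  simp only [comp_whiskerRight, whiskerLeft_comp, Category.assoc]
  rw [hr, reassoc_of% (hμ₁ X ev), ← reassoc_of% hpent, inv_hom_whiskerRight_assoc,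
    reassoc_of% (hμ coev X), reassoc_of% hl, Iso.inv_hom_id_assoc]
  simp only [← F.map_comp, hzig, F.map_id]

theorem map_zigzag_right (μ₁ : ∀ A B : C, F'.obj A ⊗ F'.obj B ⟶ F'.obj (A ⊗ B))
    (hν : ∀ {A A' : C} (f : A ⟶ A') (B : C),
      (F.map f ▷ F'.obj B) ≫ (ν A' B).hom = (ν A B).hom ≫ F'.map (f ▷ B))
    (hμ₁ : ∀ (A : C) {B B' : C} (f : B ⟶ B'),
      (F'.obj A ◁ F'.map f) ≫ μ₁ A B' = μ₁ A B ≫ F'.map (A ◁ f))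
    (hpent : (μ Y X ▷ F'.obj Y) ≫ (ν (Y ⊗ X) Y).hom ≫ F'.map (α_ Y X Y).hom
      = (α_ (F'.obj Y) (F.obj X) (F'.obj Y)).hom ≫ (F'.obj Y ◁ (ν X Y).hom) ≫ μ₁ Y (X ⊗ Y))
    (hunitl : (ε.hom ▷ F'.obj Y) ≫ (ν (𝟙_ C) Y).hom ≫ F'.map (λ_ Y).hom = (λ_ (F'.obj Y)).hom)
    (hunitr : (F'.obj Y ◁ ε') ≫ μ₁ Y (𝟙_ C) ≫ F'.map (ρ_ Y).hom = (ρ_ (F'.obj Y)).hom)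
    (hzig : (ρ_ Y).inv ≫ (Y ◁ coev) ≫ (α_ Y X Y).inv ≫ (ev ▷ Y) ≫ (λ_ Y).hom = 𝟙 Y) :
    (ρ_ (F'.obj Y)).inv ≫ (F'.obj Y ◁ (ε' ≫ F'.map coev ≫ (ν X Y).inv)) ≫
        (α_ (F'.obj Y) (F.obj X) (F'.obj Y)).inv ≫
        ((μ Y X ≫ F.map ev ≫ ε.inv) ▷ F'.obj Y) ≫ (λ_ (F'.obj Y)).hom = 𝟙 (F'.obj Y) := by
  have hl : (ε.inv ▷ F'.obj Y) ≫ (λ_ (F'.obj Y)).hom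
      = (ν (𝟙_ C) Y).hom ≫ F'.map (λ_ Y).hom := by
    rw [← hunitl, inv_hom_whiskerRight_assoc]
  have hr : (F'.obj Y ◁ ε') ≫ μ₁ Y (𝟙_ C) = (ρ_ (F'.obj Y)).hom ≫ F'.map (ρ_ Y).inv := by
    rw [← hunitr]; simp
  have hpent' : (α_ (F'.obj Y) (F.obj X) (F'.obj Y)).inv ≫ (μ Y X ▷ F'.obj Y) ≫ (ν (Y ⊗ X) Y).hom
      = (F'.obj Y ◁ (ν X Y).hom) ≫ μ₁ Y (X ⊗ Y) ≫ F'.map (α_ Y X Y).inv := by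
    rw [← cancel_mono (F'.map (α_ Y X Y).hom)]
    simp only [Category.assoc, ← F'.map_comp, Iso.inv_hom_id, F'.map_id, Category.comp_id]
    rw [hpent, Iso.inv_hom_id_assoc]
  simp only [comp_whiskerRight, whiskerLeft_comp, Category.assoc]
  rw [hl, reassoc_of% (hν ev Y), reassoc_of% hpent', whiskerLeft_inv_hom_assoc,
    reassoc_of% (hμ₁ Y coev), reassoc_of% hr, Iso.inv_hom_id_assoc]
  simp only [← F'.map_comp, hzig, F'.map_id]

end TransportDuality

section ReindexedTensorator

variable {G Γ : Type*} (r2 : Γ → G → G) {C : Type*} [Category C] [MonoidalCategory C]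
  (γ : G → C ⥤ C)
  (J : ∀ (g : G) (t : Γ) (X Y : C), ((γ (r2 t g)).obj X ⊗ (γ g).obj Y) ≅ (γ g).obj (X ⊗ Y))

/-- `J g t` with the index of its first factor rewritten along `h`; this absorbs the equalities
`1 ▷₂ g = g` and `s⁻¹ ▷₂ (s ▷₂ g) = g`, which do not hold definitionally. -/
def reindexedTensorator (g : G) (t : Γ) {a : G} (h : r2 t g = a) (X Y : C) :
    (γ a).obj X ⊗ (γ g).obj Y ≅ (γ g).obj (X ⊗ Y) :=
  whiskerRightIso (eqToIso (by rw [h])) _ ≪≫ J g t X Y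

@[simp]
theorem reindexedTensorator_rfl (g : G) (t : Γ) (X Y : C) :
    reindexedTensorator r2 γ J g t rfl X Y = J g t X Y := by
  ext; simp [reindexedTensorator]

variable {r2 γ J}

theorem reindexedTensorator_inv {g : G} {t : Γ} {a : G} (h : r2 t g = a) (X Y : C) :
    (reindexedTensorator r2 γ J g t h X Y).inv = (J g t X Y).inv ≫ eqToHom (by rw [h]) := by
  subst h; simp

theorem reindexedTensorator_natural_left
    (hJnat : ∀ (g : G) (t : Γ) (X X' Y Y' : C) (f : X ⟶ X') (k : Y ⟶ Y'),
      ((γ (r2 t g)).map f ⊗ₘ (γ g).map k) ≫ (J g t X' Y').hom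
        = (J g t X Y).hom ≫ (γ g).map (f ⊗ₘ k))
    {g : G} {t : Γ} {a : G} (h : r2 t g = a) {A A' : C} (f : A ⟶ A') (B : C) :
    ((γ a).map f ▷ (γ g).obj B) ≫ (reindexedTensorator r2 γ J g t h A' B).hom
      = (reindexedTensorator r2 γ J g t h A B).hom ≫ (γ g).map (f ▷ B) := by
  subst h; simpa using hJnat g t A A' B B f (𝟙 B)

theorem reindexedTensorator_natural_right
    (hJnat : ∀ (g : G) (t : Γ) (X X' Y Y' : C) (f : X ⟶ X') (k : Y ⟶ Y'),
      ((γ (r2 t g)).map f ⊗ₘ (γ g).map k) ≫ (J g t X' Y').hom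
        = (J g t X Y).hom ≫ (γ g).map (f ⊗ₘ k))
    {g : G} {t : Γ} {a : G} (h : r2 t g = a) (A : C) {B B' : C} (f : B ⟶ B') :
    ((γ a).obj A ◁ (γ g).map f) ≫ (reindexedTensorator r2 γ J g t h A B').hom
      = (reindexedTensorator r2 γ J g t h A B).hom ≫ (γ g).map (A ◁ f) := by
  subst h; simpa using hJnat g t A A B B' (𝟙 A) f

theorem reindexedTensorator_pentagon [Mul Γ] (h2mul : ∀ s t g, r2 (s * t) g = r2 s (r2 t g))
    (P : Γ → C → Prop)
    (hpent : ∀ (g : G) (t u : Γ) (X Y Z : C), P t Y → P u Z →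
      ((J (r2 u g) t X Y).hom ▷ (γ g).obj Z) ≫ (J g u (X ⊗ Y) Z).hom ≫
          (γ g).map (α_ X Y Z).hom
        = eqToHom (by rw [h2mul]) ≫
            (α_ ((γ (r2 (t * u) g)).obj X) ((γ (r2 u g)).obj Y) ((γ g).obj Z)).hom ≫
            ((γ (r2 (t * u) g)).obj X ◁ (J g u Y Z).hom) ≫ (J g (t * u) X (Y ⊗ Z)).hom)
    {g a b : G} {t u v : Γ} (hb : r2 u g = b) (ha : r2 t b = a) (hv : t * u = v)
    {X Y Z : C} (hY : P t Y) (hZ : P u Z) :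
    ((reindexedTensorator r2 γ J b t ha X Y).hom ▷ (γ g).obj Z) ≫
        (reindexedTensorator r2 γ J g u hb (X ⊗ Y) Z).hom ≫ (γ g).map (α_ X Y Z).hom
      = (α_ ((γ a).obj X) ((γ b).obj Y) ((γ g).obj Z)).hom ≫
        ((γ a).obj X ◁ (reindexedTensorator r2 γ J g u hb Y Z).hom) ≫
        (reindexedTensorator r2 γ J g v (by rw [← hv, h2mul, hb, ha]) X (Y ⊗ Z)).hom := by
  subst hb hv
  obtain rfl : r2 (t * u) g = a := by rw [h2mul, ha]
  simp [reindexedTensorator, hpent g t u X Y Z hY hZ]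

theorem reindexedTensorator_leftUnitor (φ : ∀ g : G, 𝟙_ C ≅ (γ g).obj (𝟙_ C))
    (P : Γ → C → Prop)
    (hunitl : ∀ (g : G) (t : Γ) (Y : C), P t Y →
      ((φ (r2 t g)).hom ▷ (γ g).obj Y) ≫ (J g t (𝟙_ C) Y).hom ≫ (γ g).map (λ_ Y).hom
        = (λ_ ((γ g).obj Y)).hom)
    {g : G} {t : Γ} {a : G} (h : r2 t g = a) {Y : C} (hY : P t Y) :
    ((φ a).hom ▷ (γ g).obj Y) ≫ (reindexedTensorator r2 γ J g t h (𝟙_ C) Y).hom ≫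
        (γ g).map (λ_ Y).hom = (λ_ ((γ g).obj Y)).hom := by
  subst h; simpa using hunitl g t Y hY

theorem reindexedTensorator_rightUnitor [One Γ] (φ : ∀ g : G, 𝟙_ C ≅ (γ g).obj (𝟙_ C))
    (h2id : ∀ g, r2 1 g = g)
    (hunitr : ∀ (g : G) (X : C),
      ((γ (r2 1 g)).obj X ◁ (φ g).hom) ≫ (J g 1 X (𝟙_ C)).hom ≫ (γ g).map (ρ_ X).hom
        = eqToHom (by rw [h2id]) ≫ (ρ_ ((γ g).obj X)).hom)
    (g : G) (X : C) :
    ((γ g).obj X ◁ (φ g).hom) ≫ (reindexedTensorator r2 γ J g 1 (h2id g) X (𝟙_ C)).hom ≫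
        (γ g).map (ρ_ X).hom = (ρ_ ((γ g).obj X)).hom := by
  simp only [reindexedTensorator, Iso.trans_hom, whiskerRightIso_hom, eqToIso.hom,
    Category.assoc]
  rw [whisker_exchange_assoc, hunitr, eqToHom_whiskerRight, eqToHom_trans_assoc, eqToHom_refl,
    Category.id_comp]

end ReindexedTensorator

/-- In a `(G,Γ)`-crossed monoidal category (in the sense of Natale), if a homogeneous object
`λ` of degree `s` has a left dual `λ^∨` (with evaluation and coevaluation satisfying the
zigzag equations), then for any `g : G` the object `ᵍλ` has left dual `^{∂λ ▷₂ g}(λ^∨)`,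
with evaluation `ᵍ(ev_λ)` and coevaluation `^{∂λ ▷₂ g}(coev_λ)` (composed with the canonical
coherence isomorphisms `J` and `φ`), again satisfying the zigzag equations. -/
theorem statement_15 {G Γ : Type*} [Group Γ]
    (r2 : Γ → G → G)
    (h2id : ∀ g, r2 1 g = g) (h2mul : ∀ s t g, r2 (s * t) g = r2 s (r2 t g))
    {C : Type*} [Category C] [MonoidalCategory C]
    (P : Γ → C → Prop)
    (γ : G → C ⥤ C)
    (J : ∀ (g : G) (t : Γ) (X Y : C), ((γ (r2 t g)).obj X ⊗ (γ g).obj Y) ≅ (γ g).obj (X ⊗ Y))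
    (φ : ∀ g : G, 𝟙_ C ≅ (γ g).obj (𝟙_ C))
    (hJnat : ∀ (g : G) (t : Γ) (X X' Y Y' : C) (f : X ⟶ X') (k : Y ⟶ Y'),
      ((γ (r2 t g)).map f ⊗ₘ (γ g).map k) ≫ (J g t X' Y').hom
        = (J g t X Y).hom ≫ (γ g).map (f ⊗ₘ k))
    (hpent : ∀ (g : G) (t u : Γ) (X Y Z : C), P t Y → P u Z →
      ((J (r2 u g) t X Y).hom ▷ (γ g).obj Z) ≫ (J g u (X ⊗ Y) Z).hom ≫
          (γ g).map (α_ X Y Z).hom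
        = eqToHom (by rw [h2mul]) ≫
            (α_ ((γ (r2 (t * u) g)).obj X) ((γ (r2 u g)).obj Y) ((γ g).obj Z)).hom ≫
            ((γ (r2 (t * u) g)).obj X ◁ (J g u Y Z).hom) ≫ (J g (t * u) X (Y ⊗ Z)).hom)
    (hunitl : ∀ (g : G) (t : Γ) (Y : C), P t Y →
      ((φ (r2 t g)).hom ▷ (γ g).obj Y) ≫ (J g t (𝟙_ C) Y).hom ≫ (γ g).map (λ_ Y).hom
        = (λ_ ((γ g).obj Y)).hom)
    (hunitr : ∀ (g : G) (X : C),
      ((γ (r2 1 g)).obj X ◁ (φ g).hom) ≫ (J g 1 X (𝟙_ C)).hom ≫ (γ g).map (ρ_ X).hom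
        = eqToHom (by rw [h2id]) ≫ (ρ_ ((γ g).obj X)).hom) :
    ∀ (s : Γ) (g : G) (lam lamd : C), P s lam → P s⁻¹ lamd →
      ∀ (ev : lamd ⊗ lam ⟶ 𝟙_ C) (coev : 𝟙_ C ⟶ lam ⊗ lamd),
        (λ_ lam).inv ≫ (coev ▷ lam) ≫ (α_ lam lamd lam).hom ≫ (lam ◁ ev) ≫ (ρ_ lam).hom
            = 𝟙 lam →
        (ρ_ lamd).inv ≫ (lamd ◁ coev) ≫ (α_ lamd lam lamd).inv ≫ (ev ▷ lamd) ≫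
            (λ_ lamd).hom = 𝟙 lamd →
        let ev' : ((γ (r2 s g)).obj lamd ⊗ (γ g).obj lam) ⟶ 𝟙_ C :=
          (J g s lamd lam).hom ≫ (γ g).map ev ≫ (φ g).inv
        let coev' : 𝟙_ C ⟶ ((γ g).obj lam ⊗ (γ (r2 s g)).obj lamd) :=
          (φ (r2 s g)).hom ≫ (γ (r2 s g)).map coev ≫ (J (r2 s g) s⁻¹ lam lamd).inv ≫
            eqToHom (by rw [← h2mul, inv_mul_cancel, h2id])
        ((λ_ ((γ g).obj lam)).inv ≫ (coev' ▷ (γ g).obj lam) ≫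
            (α_ ((γ g).obj lam) ((γ (r2 s g)).obj lamd) ((γ g).obj lam)).hom ≫
            ((γ g).obj lam ◁ ev') ≫ (ρ_ ((γ g).obj lam)).hom = 𝟙 ((γ g).obj lam)) ∧
        ((ρ_ ((γ (r2 s g)).obj lamd)).inv ≫ ((γ (r2 s g)).obj lamd ◁ coev') ≫
            (α_ ((γ (r2 s g)).obj lamd) ((γ g).obj lam) ((γ (r2 s g)).obj lamd)).inv ≫
            (ev' ▷ (γ (r2 s g)).obj lamd) ≫ (λ_ ((γ (r2 s g)).obj lamd)).hom
          = 𝟙 ((γ (r2 s g)).obj lamd)) := by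
  intro s g lam lamd hlam hlamd ev coev hzig₁ hzig₂ ev' coev'
  have hg : r2 s⁻¹ (r2 s g) = g := by rw [← h2mul, inv_mul_cancel, h2id]
  let ν := reindexedTensorator r2 γ J (r2 s g) s⁻¹ hg
  have hcoev : coev' = (φ (r2 s g)).hom ≫ (γ (r2 s g)).map coev ≫ (ν lam lamd).inv := by
    rw [reindexedTensorator_inv]
  have hpent₁ := reindexedTensorator_pentagon h2mul P hpent rfl hg (inv_mul_cancel s)
    (X := lam) hlamd hlam
  have hpent₂ := reindexedTensorator_pentagon h2mul P hpent hg rfl (mul_inv_cancel s)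
    (X := lamd) hlam hlamd
  simp only [reindexedTensorator_rfl] at hpent₁ hpent₂
  rw [hcoev]
  constructor
  · exact map_zigzag_left (fun A B => (J g s A B).hom) ν (φ g) (φ (r2 s g)).hom ev coev
      (fun A B => (reindexedTensorator r2 γ J g 1 (h2id g) A B).hom)
      (fun f B => by simpa using reindexedTensorator_natural_left hJnat rfl f B)
      (reindexedTensorator_natural_right hJnat (h2id g))
      hpent₁ (hunitl g s lam hlam) (reindexedTensorator_rightUnitor φ h2id hunitr g lam) hzig₁
  · exact map_zigzag_right (fun A B => (J g s A B).hom) ν (φ g) (φ (r2 s g)).hom ev coev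
      (fun A B => (reindexedTensorator r2 γ J (r2 s g) 1 (h2id _) A B).hom)
      (reindexedTensorator_natural_left hJnat hg)
      (reindexedTensorator_natural_right hJnat (h2id _))
      hpent₂ (reindexedTensorator_leftUnitor φ P hunitl hg hlamd)
      (reindexedTensorator_rightUnitor φ h2id hunitr _ lamd) hzig₂
end
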